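/- With the notation above, for fixed θ, θ' ∈ [0,π) and φ, φ', lim_{a→0⁺} (1 − ω_a·ω'_a)/a² = 2(tan²(θ/2) + tan²(θ'/2) − 2 tan(θ/2) tan(θ'/2) cos(φ−φ')). -/

import Mathlib

open Real Set Filter

lemma sin2arctan (x : ℝ) : Real.sin (2 * Real.arctan x) = 2 * x / (1 + x ^ 2) := by
  rw [Real.sin_two_mul, Real.sin_arctan, Real.cos_arctan]
  have h : Real.sqrt (1 + x ^ 2) ≠ 0 := by positivity
  have h2 : Real.sqrt (1 + x ^ 2) * Real.sqrt (1 + x ^ 2) = 1 + x ^ 2 :=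
    Real.mul_self_sqrt (by positivity)
  field_simp
  rw [Real.sq_sqrt (by positivity : (0:ℝ) ≤ 1 + x ^ 2)]

lemma cos2arctan (x : ℝ) : Real.cos (2 * Real.arctan x) = (1 - x ^ 2) / (1 + x ^ 2) := by
  rw [Real.cos_two_mul, Real.cos_arctan, div_pow, Real.sq_sqrt (by positivity : (0:ℝ) ≤ 1 + x ^ 2)]
  have h : (1 : ℝ) + x ^ 2 ≠ 0 := by positivity
  field_simp
  ring

/-- For fixed `θ, θ' ∈ [0,π)` and real `φ, φ'`, with `θ_a = 2 arctan(a tan(θ/2))` and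
`ω_a·ω'_a = sin θ_a sin θ'_a cos(φ−φ') + cos θ_a cos θ'_a`, one has
`lim_{a→0⁺} (1 − ω_a·ω'_a)/a² = 2(tan²(θ/2) + tan²(θ'/2) − 2 tan(θ/2)tan(θ'/2)cos(φ−φ'))`. -/
theorem stmt6 (θ θ' φ φ' : ℝ)
    (hθ : θ ∈ Set.Ico 0 Real.pi) (hθ' : θ' ∈ Set.Ico 0 Real.pi) :
    Filter.Tendsto (fun a : ℝ =>
      (1 - (Real.sin (2 * Real.arctan (a * Real.tan (θ / 2)))
            * Real.sin (2 * Real.arctan (a * Real.tan (θ' / 2))) * Real.cos (φ - φ')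
          + Real.cos (2 * Real.arctan (a * Real.tan (θ / 2)))
            * Real.cos (2 * Real.arctan (a * Real.tan (θ' / 2))))) / a ^ 2)
      (nhdsWithin 0 (Set.Ioi 0))
      (nhds (2 * (Real.tan (θ / 2) ^ 2 + Real.tan (θ' / 2) ^ 2
          - 2 * Real.tan (θ / 2) * Real.tan (θ' / 2) * Real.cos (φ - φ')))) := by
  set t := Real.tan (θ / 2)
  set s := Real.tan (θ' / 2)
  set c := Real.cos (φ - φ')
  set C : ℝ := 2 * (t ^ 2 + s ^ 2 - 2 * t * s * c) with hC
  have hg : Filter.Tendsto (fun a : ℝ => C / ((1 + (a * t) ^ 2) * (1 + (a * s) ^ 2)))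
      (nhdsWithin 0 (Set.Ioi 0)) (nhds C) := by
    have hden : Filter.Tendsto (fun a : ℝ => (1 + (a * t) ^ 2) * (1 + (a * s) ^ 2))
        (nhds 0) (nhds 1) := by
      have : Continuous (fun a : ℝ => (1 + (a * t) ^ 2) * (1 + (a * s) ^ 2)) := by continuity
      have h0 := this.tendsto 0
      simpa using h0
    have := (tendsto_const_nhds (x := C)).div hden one_ne_zero
    rw [div_one] at this
    exact this.mono_left nhdsWithin_le_nhds
  refine hg.congr' ?_
  filter_upwards [self_mem_nhdsWithin] with a (ha : a ∈ Set.Ioi 0)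
  have ha0 : a ≠ 0 := ne_of_gt ha
  have h1 : (1 : ℝ) + (a * t) ^ 2 ≠ 0 := by positivity
  have h2 : (1 : ℝ) + (a * s) ^ 2 ≠ 0 := by positivity
  rw [sin2arctan, sin2arctan, cos2arctan, cos2arctan]
  field_simp
  ring
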